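/- Let F be a number field of degree n with discriminant Δ_F, and let I be a nonzero fractional ideal of F with 1 ∈ I. Suppose γ > 0 is a constant satisfying Hermite's inequality for the ideal lattices of I: for every family u = (u_w)_w of positive reals indexed by the infinite places of F with N(u) = 1, there exists a nonzero g ∈ I with ‖g‖_u² ≤ γ·(N(I)·√|Δ_F|)^{2/n}, where N(I) is the absolute norm of I. If N(I⁻¹) > √(|Δ_F|·(γ/n)^n) (equivalently N(I⁻¹) > √(|Δ_F|/c_n) with c_n = (n/γ)^n), then I is not 1-reduced. -/

import Mathlib

open NumberField
open scoped nonZeroDivisors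

/-- `‖g‖_u² = Σ_w m_w·u_w²·w(g)²`, summing over the infinite places `w` of `F`, where `m_w` is
the multiplicity (1 for a real place, 2 for a complex place); `‖g‖_u` is its square root. -/
noncomputable def normUInf {F : Type*} [Field F] [NumberField F]
    (u : InfinitePlace F → ℝ) (g : F) : ℝ :=
  Real.sqrt (∑ w : InfinitePlace F, (w.mult : ℝ) * (u w) ^ 2 * (w g) ^ 2)

/-- `N(u) = Π_w u_w^{m_w}` over the infinite places `w` of `F`. -/
noncomputable def normProdInf {F : Type*} [Field F] [NumberField F]
    (u : InfinitePlace F → ℝ) : ℝ :=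
  ∏ w : InfinitePlace F, (u w) ^ w.mult

/-- `1` is primitive in `I`: `1 ∈ I` and no `1/d ∈ I` for an integer `d ≥ 2`. -/
def IsOnePrimitive {F : Type*} [Field F] [NumberField F]
    (I : FractionalIdeal (𝓞 F)⁰ F) : Prop :=
  (1 : F) ∈ I ∧ ∀ d : ℕ, 2 ≤ d → ((d : F))⁻¹ ∉ I

/-- `I` is 1-reduced: `1` is primitive in `I` and there is a family `u` of positive reals
indexed by the infinite places such that `1` is a shortest nonzero vector of `I` for `‖·‖_u`. -/
def IsOneReducedInf {F : Type*} [Field F] [NumberField F]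
    (I : FractionalIdeal (𝓞 F)⁰ F) : Prop :=
  IsOnePrimitive I ∧ ∃ u : InfinitePlace F → ℝ, (∀ w, 0 < u w) ∧
    ∀ g ∈ I, g ≠ 0 → normUInf u 1 ≤ normUInf u g

/-! If `1` were a shortest nonzero vector of `I` for `‖·‖_u`, it would stay one after rescaling
`u` to `N(u) = 1`. By AM–GM, `‖1‖_u² = Σ_w m_w u_w² ≥ n (Π_w u_w^{m_w})^{2/n} = n`, so Hermite's
inequality forces `n ≤ γ (N(I) √|Δ_F|)^{2/n}`, that is `N(I⁻¹) ≤ √(|Δ_F| (γ/n)^n)`. -/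

namespace Real

theorem sum_le_sum_mul_of_prod_pow_eq_one {ι : Type*} (s : Finset ι) (m : ι → ℕ) (z : ι → ℝ)
    (hm : 0 < ∑ i ∈ s, m i) (hz : ∀ i ∈ s, 0 ≤ z i) (hprod : ∏ i ∈ s, z i ^ m i = 1) :
    ((∑ i ∈ s, m i : ℕ) : ℝ) ≤ ∑ i ∈ s, m i * z i := by
  have hm' : (0 : ℝ) < ∑ i ∈ s, (m i : ℝ) := by exact_mod_cast hm
  have amgm := geom_mean_le_arith_mean s (fun i ↦ (m i : ℝ)) z (fun i _ ↦ Nat.cast_nonneg _) hm' hz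
  simp only [rpow_natCast, hprod, one_rpow] at amgm
  push_cast
  rwa [one_le_div hm'] at amgm

theorem mul_rpow_two_div_lt_of_sqrt_lt {γ N D : ℝ} {n : ℕ} (hn : 0 < n) (hγ : 0 ≤ γ)
    (hD : 0 ≤ D) (h : √(D * (γ / n) ^ n) < N⁻¹) : γ * (N * √D) ^ ((2 : ℝ) / n) < n := by
  have hnR : (0 : ℝ) < n := by exact_mod_cast hn
  have hN : 0 < N⁻¹ := (sqrt_nonneg _).trans_lt h
  have hN' : 0 < N := inv_pos.mp hN
  set X := N * √D
  have hX : 0 ≤ X := mul_nonneg hN'.le (sqrt_nonneg D)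
  have hsq : X ^ 2 * (γ / n) ^ n < 1 := by
    rw [sqrt_lt' hN] at h
    calc X ^ 2 * (γ / n) ^ n = N ^ 2 * (D * (γ / n) ^ n) := by rw [mul_pow, sq_sqrt hD]; ring
      _ < N ^ 2 * N⁻¹ ^ 2 := by gcongr
      _ = 1 := by field_simp
  have hpow : (X ^ ((2 : ℝ) / n) * (γ / n)) ^ n = X ^ 2 * (γ / n) ^ n := by
    rw [mul_pow, ← rpow_natCast, ← rpow_mul hX, div_mul_cancel₀ _ hnR.ne', rpow_two]
  rwa [← hpow, pow_lt_one_iff_of_nonneg (by positivity) hn.ne', ← mul_div_assoc,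
    div_lt_one hnR, mul_comm] at hsq

end Real

section

variable {F : Type*} [Field F] [NumberField F]

theorem normUInf_smul {c : ℝ} (hc : 0 ≤ c) (u : InfinitePlace F → ℝ) (g : F) :
    normUInf (c • u) g = c * normUInf u g := by
  rw [normUInf, normUInf, ← Real.sqrt_sq hc, ← Real.sqrt_mul (sq_nonneg c), Finset.mul_sum,
    Real.sqrt_sq hc]
  congr 1
  refine Finset.sum_congr rfl fun w _ ↦ ?_
  simp only [Pi.smul_apply, smul_eq_mul]
  ring

theorem normUInf_one_sq (u : InfinitePlace F → ℝ) :
    normUInf u 1 ^ 2 = ∑ w : InfinitePlace F, (w.mult : ℝ) * u w ^ 2 := by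
  simp only [normUInf, map_one, one_pow, mul_one]
  exact Real.sq_sqrt (Finset.sum_nonneg fun w _ ↦ by positivity)

theorem normProdInf_smul (c : ℝ) (u : InfinitePlace F → ℝ) :
    normProdInf (c • u) = c ^ Module.finrank ℚ F * normProdInf u := by
  simp only [normProdInf, Pi.smul_apply, smul_eq_mul, mul_pow, Finset.prod_mul_distrib,
    Finset.prod_pow_eq_pow_sum, InfinitePlace.sum_mult_eq]

theorem exists_pos_normProdInf_smul_eq_one {u : InfinitePlace F → ℝ} (hu : ∀ w, 0 < u w) :
    ∃ c : ℝ, 0 < c ∧ normProdInf (c • u) = 1 := by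
  have hP : 0 < normProdInf u := Finset.prod_pos fun w _ ↦ pow_pos (hu w) _
  have hn : (Module.finrank ℚ F : ℝ) ≠ 0 := by exact_mod_cast Module.finrank_pos.ne'
  refine ⟨normProdInf u ^ (-(Module.finrank ℚ F : ℝ)⁻¹), Real.rpow_pos_of_pos hP _, ?_⟩
  rw [normProdInf_smul, ← Real.rpow_natCast, ← Real.rpow_mul hP.le, neg_mul,
    inv_mul_cancel₀ hn, Real.rpow_neg_one, inv_mul_cancel₀ hP.ne']

theorem finrank_le_normUInf_one_sq {u : InfinitePlace F → ℝ} (hN : normProdInf u = 1) :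
    (Module.finrank ℚ F : ℝ) ≤ normUInf u 1 ^ 2 := by
  rw [normUInf_one_sq, ← InfinitePlace.sum_mult_eq]
  refine Real.sum_le_sum_mul_of_prod_pow_eq_one _ _ _ ?_ (fun w _ ↦ sq_nonneg (u w)) ?_
  · rw [InfinitePlace.sum_mult_eq]
    exact Module.finrank_pos
  · rw [Finset.prod_congr rfl fun w _ ↦ pow_right_comm (u w) 2 w.mult, Finset.prod_pow]
    change normProdInf u ^ 2 = 1
    rw [hN, one_pow]

end

theorem not_oneReduced_of_absNorm_inv_gt_general {F : Type*} [Field F] [NumberField F]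
    (γ : ℝ) (hγ : 0 < γ)
    (I : FractionalIdeal (𝓞 F)⁰ F)
    (hHermite : ∀ u : InfinitePlace F → ℝ, (∀ w, 0 < u w) → normProdInf u = 1 →
      ∃ g ∈ I, g ≠ 0 ∧ normUInf u g ^ 2 ≤
        γ * (((FractionalIdeal.absNorm I : ℝ) * Real.sqrt |(discr F : ℝ)|) ^
          ((2 : ℝ) / (Module.finrank ℚ F : ℝ))))
    (hnorm : Real.sqrt (|(discr F : ℝ)| * (γ / (Module.finrank ℚ F : ℝ)) ^ (Module.finrank ℚ F))
      < (FractionalIdeal.absNorm I⁻¹ : ℝ)) :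
    ¬ IsOneReducedInf I := by
  rintro ⟨-, u, hu, hmin⟩
  obtain ⟨c, hc, hcu⟩ := exists_pos_normProdInf_smul_eq_one hu
  have hcu_pos : ∀ w, 0 < (c • u) w := fun w ↦ mul_pos hc (hu w)
  obtain ⟨g, hgI, hg0, hg⟩ := hHermite (c • u) hcu_pos hcu
  rw [map_inv₀, Rat.cast_inv] at hnorm
  refine (Real.mul_rpow_two_div_lt_of_sqrt_lt Module.finrank_pos hγ.le (abs_nonneg _)
    hnorm).not_ge ?_
  calc (Module.finrank ℚ F : ℝ) ≤ normUInf (c • u) 1 ^ 2 :=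
        finrank_le_normUInf_one_sq hcu
    _ ≤ normUInf (c • u) g ^ 2 := by
        rw [normUInf_smul hc.le, normUInf_smul hc.le]
        gcongr
        exacts [mul_nonneg hc.le (Real.sqrt_nonneg _), hmin g hgI hg0]
    _ ≤ _ := hg

/-- Proposition 4.1: if `γ` satisfies Hermite's inequality for the ideal lattices of `I` and
`N(I⁻¹) > √(|Δ_F|·(γ/n)^n)`, then `I` is not 1-reduced. -/
theorem not_oneReduced_of_absNorm_inv_gt {F : Type*} [Field F] [NumberField F]
    (γ : ℝ) (hγ : 0 < γ)
    (I : FractionalIdeal (𝓞 F)⁰ F) (h1I : (1 : F) ∈ I)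
    (hHermite : ∀ u : InfinitePlace F → ℝ, (∀ w, 0 < u w) → normProdInf u = 1 →
      ∃ g ∈ I, g ≠ 0 ∧ normUInf u g ^ 2 ≤
        γ * (((FractionalIdeal.absNorm I : ℝ) * Real.sqrt |(discr F : ℝ)|) ^
          ((2 : ℝ) / (Module.finrank ℚ F : ℝ))))
    (hnorm : Real.sqrt (|(discr F : ℝ)| * (γ / (Module.finrank ℚ F : ℝ)) ^ (Module.finrank ℚ F))
      < (FractionalIdeal.absNorm I⁻¹ : ℝ)) :
    ¬ IsOneReducedInf I :=
  not_oneReduced_of_absNorm_inv_gt_general γ hγ I hHermite hnorm
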